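/- There exists a natural number N such that for all n ≥ N, the graph H_n satisfies P_{H_n}(5)·P_{H_n}(7) > P_{H_n}(6)². In particular, the chromatic polynomial of H_n is not log-concave at q = 6 for all sufficiently large n. -/

import Mathlib

/-!
Every colour class of a proper colouring of `H_n` meets the blocks in an independent set of the
six-vertex pattern graph, hence lies in one of its four maximal independent sets `{4,5,6}`,
`{1,4}`, `{2,5}`, `{3,6}`. Once such a set is fixed for each of the six colours (`4^6` choices),
block `i` may only use the colours whose set contains `i`; if `t, a, b, c` colours are assigned to
the four sets, this leaves at most `(a b c (t+a) (t+b) (t+c))^n ≤ 72^n` colourings, so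
`P(6) ≤ 4^6 · 72^n`. Conversely, palettes that are disjoint on adjacent blocks give
`P(5) ≥ 27^n` and `P(7) ≥ 216^n`, and `27 · 216 = 5832 > 5184 = 72^2`.
-/

/-- The nine (0-indexed) block pairs `(i,j)`, `i < j`, between which all edges of Seymour's
graph `H` are present; 1-indexed they are
`(1,2),(1,3),(2,3),(2,4),(3,4),(1,5),(3,5),(1,6),(2,6)`. -/
def seymourPairs : List (Fin 6 × Fin 6) :=
  [(0,1), (0,2), (1,2), (1,3), (2,3), (0,4), (2,4), (0,5), (1,5)]

/-- Seymour's graph `H_n` on the vertex set `{1,…,6} × {1,…,n}` (six blocks of size `n`):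
a vertex in block `i` is adjacent to a vertex in block `j` (for `i < j`) iff `(i,j)` is one of
the pairs `(1,2),(1,3),(2,3),(2,4),(3,4),(1,5),(3,5),(1,6),(2,6)`; no edges inside a block. -/
def seymourH (n : ℕ) : SimpleGraph (Fin 6 × Fin n) :=
  SimpleGraph.fromRel (fun x y => (x.1, y.1) ∈ seymourPairs)

instance (n : ℕ) : DecidableRel (seymourH n).Adj := fun x y =>
  decidable_of_iff' _ (SimpleGraph.fromRel_adj _ x y)

open Finset Filter

namespace SimpleGraph

variable {V ι α : Type*} [Fintype V] {G : SimpleGraph ι}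

theorem prod_card_le_card_coloring_comap [Fintype α] (f : V → ι) (pal : ι → Finset α)
    (hpal : ∀ i j, G.Adj i j → Disjoint (pal i) (pal j)) :
    ∏ v, #(pal (f v)) ≤ Nat.card ((G.comap f).Coloring α) := by
  let toColoring (g : ∀ v, pal (f v)) : (G.comap f).Coloring α :=
    Coloring.mk (fun v => g v) fun {v w} hvw hgvw =>
      Finset.disjoint_left.mp (hpal _ _ hvw) (g v).2 (hgvw ▸ (g w).2)
  have hinj : Function.Injective toColoring := fun g g' h =>
    funext fun v => Subtype.ext (DFunLike.congr_fun h v)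
  simpa [Nat.card_pi] using Nat.card_le_card_of_injective toColoring hinj

theorem isIndepSet_image_colorClass [DecidableEq ι] [DecidableEq α] {f : V → ι}
    (c : (G.comap f).Coloring α) (k : α) :
    G.IsIndepSet (({v | c v = k} : Finset V).image f) := by
  simp only [isIndepSet_iff, coe_image, coe_filter, mem_univ, true_and]
  rintro _ ⟨v, hv, rfl⟩ _ ⟨w, hw, rfl⟩ - hadj
  exact c.valid hadj (hv.trans hw.symm)

theorem card_coloring_comap_le [Fintype α] [DecidableEq ι] [DecidableEq α] {κ : Type*}
    [Fintype κ] (f : V → ι) (M : κ → Finset ι)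
    (hM : ∀ s : Finset ι, G.IsIndepSet s → ∃ b, s ⊆ M b)
    (m : ℕ) (hm : ∀ B : α → κ, ∏ v, #{k | f v ∈ M (B k)} ≤ m) :
    Nat.card ((G.comap f).Coloring α) ≤ Fintype.card κ ^ Fintype.card α * m := by
  choose B hB using fun (c : (G.comap f).Coloring α) k => hM _ (isIndepSet_image_colorClass c k)
  have hmem (c : (G.comap f).Coloring α) (v : V) : c v ∈ ({k | f v ∈ M (B c k)} : Finset α) :=
    mem_filter.mpr ⟨mem_univ _, hB c (c v) (mem_image_of_mem f (by simp))⟩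
  let encode (c : (G.comap f).Coloring α) :
      Σ B : α → κ, ∀ v, ({k | f v ∈ M (B k)} : Finset α) :=
    ⟨B c, fun v => ⟨c v, hmem c v⟩⟩
  have hinj : Function.Injective encode := fun c c' h =>
    DFunLike.coe_injective (congrArg (fun x v => (x.2 v : α)) h)
  calc Nat.card ((G.comap f).Coloring α)
      ≤ Nat.card (Σ B : α → κ, ∀ v, ({k | f v ∈ M (B k)} : Finset α)) :=
        Nat.card_le_card_of_injective encode hinj
    _ = ∑ B : α → κ, ∏ v, #{k | f v ∈ M (B k)} := by
        simp only [Nat.card_sigma, Nat.card_pi, Nat.card_eq_finsetCard]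
    _ ≤ ∑ _B : α → κ, m := sum_le_sum fun B _ => hm B
    _ = Fintype.card κ ^ Fintype.card α * m := by simp

theorem pow_card_le_card_coloring_comap_fst {β : Type*} [Fintype ι] [Fintype β] [Fintype α]
    (pal : ι → Finset α) (hpal : ∀ i j, G.Adj i j → Disjoint (pal i) (pal j)) :
    (∏ i, #(pal i)) ^ Fintype.card β ≤
      Nat.card ((G.comap (Prod.fst : ι × β → ι)).Coloring α) := by
  simpa [Fintype.prod_prod_type, prod_pow] using
    prod_card_le_card_coloring_comap (Prod.fst : ι × β → ι) pal hpal

theorem card_coloring_comap_fst_le {β κ : Type*} [Fintype ι] [Fintype β] [Fintype α]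
    [Fintype κ] [DecidableEq ι] [DecidableEq α] (M : κ → Finset ι)
    (hM : ∀ s : Finset ι, G.IsIndepSet s → ∃ b, s ⊆ M b)
    (m : ℕ) (hm : ∀ B : α → κ, ∏ i, #{k | i ∈ M (B k)} ≤ m) :
    Nat.card ((G.comap (Prod.fst : ι × β → ι)).Coloring α) ≤
      Fintype.card κ ^ Fintype.card α * m ^ Fintype.card β := by
  refine card_coloring_comap_le (Prod.fst : ι × β → ι) M hM _ fun B => ?_
  simpa [Fintype.prod_prod_type, prod_pow] using Nat.pow_le_pow_left (hm B) (Fintype.card β)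

end SimpleGraph

theorem eventually_mul_pow_lt_pow (C : ℕ) {a b : ℕ} (hab : a < b) :
    ∀ᶠ n in atTop, C * a ^ n < b ^ n := by
  have hb : (0 : ℝ) < b := by exact_mod_cast (Nat.zero_le a).trans_lt hab
  have hlo := isLittleO_pow_pow_of_lt_left (Nat.cast_nonneg a)
    (Nat.cast_lt.mpr hab : (a : ℝ) < b)
  filter_upwards [hlo.def (c := 1 / (2 * (C + 1))) (by positivity)] with n hn
  rw [Real.norm_of_nonneg (by positivity), Real.norm_of_nonneg (by positivity)] at hn
  have hlt : (C : ℝ) * a ^ n < b ^ n :=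
    calc (C : ℝ) * a ^ n ≤ (C + 1) * a ^ n := by gcongr; linarith
      _ ≤ (C + 1) * (1 / (2 * (C + 1)) * b ^ n) := by gcongr
      _ = b ^ n / 2 := by field_simp
      _ < b ^ n := by linarith [pow_pos hb n]
  exact_mod_cast hlt

def seymourPattern : SimpleGraph (Fin 6) :=
  SimpleGraph.fromRel fun i j => (i, j) ∈ seymourPairs

instance : DecidableRel seymourPattern.Adj := fun i j =>
  decidable_of_iff' _ (SimpleGraph.fromRel_adj _ i j)

theorem seymourH_eq_comap (n : ℕ) : seymourH n = seymourPattern.comap Prod.fst := by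
  have hne : ∀ i j : Fin 6, (i, j) ∈ seymourPairs ∨ (j, i) ∈ seymourPairs → i ≠ j := by
    decide
  ext x y
  simp only [seymourH, seymourPattern, SimpleGraph.comap_adj, SimpleGraph.fromRel_adj]
  exact ⟨fun h => ⟨hne _ _ h.2, h.2⟩,
    fun h => ⟨fun hxy => h.1 (congrArg Prod.fst hxy), h.2⟩⟩

def seymourMaxIndep : Fin 4 → Finset (Fin 6) := ![{3, 4, 5}, {0, 3}, {1, 4}, {2, 5}]

theorem seymourPattern_isIndepSet_subset :
    ∀ s : Finset (Fin 6), seymourPattern.IsIndepSet s → ∃ b, s ⊆ seymourMaxIndep b := by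
  decide

theorem prod_sum_seymourMaxIndep_le (x : Fin 4 → ℕ) (hx : ∑ b, x b = 6) :
    ∏ i, ∑ b with i ∈ seymourMaxIndep b, x b ≤ 72 := by
  have hprod : ∏ i, ∑ b with i ∈ seymourMaxIndep b, x b =
      x 1 * x 2 * x 3 * (x 0 + x 1) * (x 0 + x 2) * (x 0 + x 3) := by
    simp only [Finset.sum_filter]
    simp [Fin.prod_univ_six, Fin.sum_univ_four, seymourMaxIndep]
  have hmax : ∀ t < 7, ∀ a < 7, ∀ b < 7, ∀ c < 7, t + a + b + c = 6 →
      a * b * c * (t + a) * (t + b) * (t + c) ≤ 72 := by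
    decide
  rw [Fin.sum_univ_four] at hx
  rw [hprod]
  exact hmax _ (by omega) _ (by omega) _ (by omega) _ (by omega) hx

theorem prod_card_seymourMaxIndep_le (B : Fin 6 → Fin 4) :
    ∏ i, #{k | i ∈ seymourMaxIndep (B k)} ≤ 72 := by
  have hfib (i : Fin 6) : #{k | i ∈ seymourMaxIndep (B k)} =
      ∑ b with i ∈ seymourMaxIndep b, #{k | B k = b} := by
    rw [sum_card_fiberwise_eq_card_filter]; simp
  simp only [hfib]
  refine prod_sum_seymourMaxIndep_le _ ?_
  rw [sum_card_fiberwise_eq_card_filter]; simp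

-- Blocks 4, 5, 6 are pairwise non-adjacent and each is non-adjacent to exactly one block of the
-- triangle 1, 2, 3, whose colours it may reuse.
theorem pow_le_card_coloring_seymourH_five (n : ℕ) :
    27 ^ n ≤ Nat.card ((seymourH n).Coloring (Fin 5)) := by
  rw [seymourH_eq_comap]
  simpa +decide [Fin.prod_univ_six] using
    SimpleGraph.pow_card_le_card_coloring_comap_fst (β := Fin n)
    (![{0}, {1}, {2}, {0, 3, 4}, {1, 3, 4}, {2, 3, 4}] : Fin 6 → Finset (Fin 5)) (by decide)

theorem pow_le_card_coloring_seymourH_seven (n : ℕ) :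
    216 ^ n ≤ Nat.card ((seymourH n).Coloring (Fin 7)) := by
  rw [seymourH_eq_comap]
  simpa +decide [Fin.prod_univ_six] using
    SimpleGraph.pow_card_le_card_coloring_comap_fst (β := Fin n)
    (![{0, 1}, {2, 3}, {4, 5}, {0, 1, 6}, {2, 3, 6}, {4, 5, 6}] : Fin 6 → Finset (Fin 7))
    (by decide)

theorem card_coloring_seymourH_six_le (n : ℕ) :
    Nat.card ((seymourH n).Coloring (Fin 6)) ≤ 4 ^ 6 * 72 ^ n := by
  rw [seymourH_eq_comap]
  simpa using SimpleGraph.card_coloring_comap_fst_le (β := Fin n) seymourMaxIndep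
    seymourPattern_isIndepSet_subset 72 prod_card_seymourMaxIndep_le

/-- For all sufficiently large `n`, Seymour's graph `H_n` violates
log-concavity of the chromatic polynomial at `q = 6`:
`P_{H_n}(5) * P_{H_n}(7) > P_{H_n}(6)^2`. -/
theorem seymourH_not_log_concave_at_six :
    ∃ N : ℕ, ∀ n : ℕ, N ≤ n →
      Fintype.card ((seymourH n).Coloring (Fin 6)) ^ 2 <
        Fintype.card ((seymourH n).Coloring (Fin 5)) *
          Fintype.card ((seymourH n).Coloring (Fin 7)) := by
  refine eventually_atTop.mp ?_
  filter_upwards [eventually_mul_pow_lt_pow ((4 ^ 6) ^ 2) (show 72 ^ 2 < 27 * 216 by norm_num)]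
    with n hn
  simp only [← Nat.card_eq_fintype_card]
  calc Nat.card ((seymourH n).Coloring (Fin 6)) ^ 2
      ≤ (4 ^ 6 * 72 ^ n) ^ 2 := Nat.pow_le_pow_left (card_coloring_seymourH_six_le n) 2
    _ = (4 ^ 6) ^ 2 * (72 ^ 2) ^ n := by rw [mul_pow, pow_right_comm _ n 2]
    _ < (27 * 216) ^ n := hn
    _ = 27 ^ n * 216 ^ n := mul_pow _ _ _
    _ ≤ _ := Nat.mul_le_mul (pow_le_card_coloring_seymourH_five n)
        (pow_le_card_coloring_seymourH_seven n)
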